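/- Let P be a monic hyperbolic real polynomial of degree n and let 2 ≤ k ≤ n−1. Suppose c ∈ ℝ is a root of P of multiplicity m with 1 ≤ m < k, and suppose P^{(k)}(c) = 0. Then c is a simple root of P^{(k)}, i.e. P^{(k+1)}(c) ≠ 0. -/

import Mathlib

/-!
For a real polynomial `p` whose roots are all real, `p'(c)² - p(c) p''(c) > 0` at every point `c`
that is not a root (Laguerre's inequality): multiplying `p` by `X - a` multiplies this quantity by
`(c - a)²` and adds `p(c)²`. By Rolle's theorem every derivative of a hyperbolic polynomial is again
hyperbolic, so two consecutive derivatives `P⁽ʲ⁺¹⁾, P⁽ʲ⁺²⁾` can only vanish together at `c` if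
`P⁽ʲ⁾(c)` does too. Going up from `P⁽ᵐ⁾(c) ≠ 0`, where `m` is the multiplicity of `c`, no two
consecutive derivatives of order at least `m` vanish at `c`.
-/

open Polynomial

namespace Polynomial

section Laguerre

variable {R : Type*} [CommRing R]

noncomputable def laguerre (p : R[X]) (c : R) : R :=
  eval c (derivative p) ^ 2 - eval c p * eval c (derivative (derivative p))

theorem laguerre_C_mul (r : R) (p : R[X]) (c : R) :
    laguerre (C r * p) c = r ^ 2 * laguerre p c := by
  simp only [laguerre, derivative_C_mul, eval_mul, eval_C]
  ring

theorem laguerre_X_sub_C_mul (a : R) (g : R[X]) (c : R) :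
    laguerre ((X - C a) * g) c = (c - a) ^ 2 * laguerre g c + eval c g ^ 2 := by
  simp only [laguerre, derivative_mul, derivative_add, derivative_sub, derivative_X,
    derivative_C, sub_zero, one_mul, eval_add, eval_mul, eval_sub, eval_X, eval_C]
  ring

variable [LinearOrder R] [IsStrictOrderedRing R]

theorem laguerre_multiset_prod_X_sub_C_nonneg (s : Multiset R) (c : R) :
    0 ≤ laguerre (s.map fun a => X - C a).prod c := by
  induction s using Multiset.induction with
  | empty => simp [laguerre]
  | cons a s ih =>
    rw [Multiset.map_cons, Multiset.prod_cons, laguerre_X_sub_C_mul]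
    positivity

theorem laguerre_multiset_prod_X_sub_C_pos {s : Multiset R} (hs : s ≠ 0) {c : R}
    (hc : eval c (s.map fun a => X - C a).prod ≠ 0) :
    0 < laguerre (s.map fun a => X - C a).prod c := by
  obtain ⟨a, ha⟩ := Multiset.exists_mem_of_ne_zero hs
  obtain ⟨t, rfl⟩ := Multiset.exists_cons_of_mem ha
  rw [Multiset.map_cons, Multiset.prod_cons, eval_mul] at hc
  rw [Multiset.map_cons, Multiset.prod_cons, laguerre_X_sub_C_mul]
  have := laguerre_multiset_prod_X_sub_C_nonneg t c
  have := right_ne_zero_of_mul hc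
  positivity

end Laguerre

theorem laguerre_pos_of_card_roots_eq_natDegree {p : ℝ[X]}
    (hroots : p.roots.card = p.natDegree) (hdeg : 0 < p.natDegree) {c : ℝ} (hc : eval c p ≠ 0) :
    0 < laguerre p c := by
  have hp : C p.leadingCoeff * (p.roots.map fun a => X - C a).prod = p :=
    C_leadingCoeff_mul_prod_multiset_X_sub_C hroots
  have hroots_ne : p.roots ≠ 0 := by
    rintro h
    simp only [h, Multiset.card_zero] at hroots
    omega
  rw [← hp, eval_mul, eval_C] at hc
  rw [← hp, laguerre_C_mul]
  exact mul_pos (pow_two_pos_of_ne_zero (left_ne_zero_of_mul hc))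
    (laguerre_multiset_prod_X_sub_C_pos hroots_ne (right_ne_zero_of_mul hc))

theorem card_roots_derivative_eq_natDegree {p : ℝ[X]} (hp : p.roots.card = p.natDegree) :
    (derivative p).roots.card = (derivative p).natDegree := by
  have := card_roots_le_derivative p
  have := card_roots' (derivative p)
  have := natDegree_derivative_le p
  omega

theorem card_roots_iterate_derivative_eq_natDegree {p : ℝ[X]} (hp : p.roots.card = p.natDegree)
    (j : ℕ) : (derivative^[j] p).roots.card = (derivative^[j] p).natDegree := by
  induction j with
  | zero => exact hp
  | succ j ih =>
    rw [Function.iterate_succ_apply']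
    exact card_roots_derivative_eq_natDegree ih

theorem natDegree_iterate_derivative_eq {R : Type*} [Semiring R] [IsAddTorsionFree R] (p : R[X])
    (j : ℕ) : (derivative^[j] p).natDegree = p.natDegree - j := by
  induction j with
  | zero => rfl
  | succ j ih => rw [Function.iterate_succ_apply', natDegree_derivative, ih, Nat.sub_sub]

theorem eval_iterate_derivative_rootMultiplicity_ne_zero {R : Type*} [CommRing R]
    [NoZeroDivisors R] [CharZero R] {p : R[X]} (hp : p ≠ 0) (t : R) :
    (derivative^[p.rootMultiplicity t] p).eval t ≠ 0 := by
  rw [eval_iterate_derivative_rootMultiplicity, nsmul_eq_mul]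
  exact mul_ne_zero (Nat.cast_ne_zero.2 (Nat.factorial_ne_zero _))
    (eval_divByMonic_pow_rootMultiplicity_ne_zero t hp)

theorem eval_iterate_derivative_succ_ne_zero {p : ℝ[X]} (hp : p.roots.card = p.natDegree) {c : ℝ}
    {m : ℕ} (hm : (derivative^[m] p).eval c ≠ 0) {j : ℕ} (hmj : m ≤ j) (hj : j < p.natDegree)
    (hjc : (derivative^[j] p).eval c = 0) : (derivative^[j + 1] p).eval c ≠ 0 := by
  induction j, hmj using Nat.le_induction with
  | base => exact absurd hjc hm
  | succ j hmj ih =>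
    intro hj2
    have hj0 : (derivative^[j] p).eval c ≠ 0 := fun h => ih (by omega) h hjc
    have hpos := laguerre_pos_of_card_roots_eq_natDegree
      (card_roots_iterate_derivative_eq_natDegree hp j)
      (by rw [natDegree_iterate_derivative_eq]; omega) hj0
    rw [Function.iterate_succ_apply'] at hjc
    rw [Function.iterate_succ_apply', Function.iterate_succ_apply'] at hj2
    simp [laguerre, hjc, hj2] at hpos

end Polynomial

theorem low_multiplicity_common_root_is_simple_root_of_derivative_general
    (n k m : ℕ) (hk' : k ≤ n - 1)
    (P : Polynomial ℝ) (hdeg : P.natDegree = n)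
    (hroots : P.roots.card = n)
    (c : ℝ) (hmult : P.rootMultiplicity c = m) (hm1 : 1 ≤ m) (hmk : m < k)
    (hck : (Polynomial.derivative^[k] P).eval c = 0) :
    (Polynomial.derivative^[k + 1] P).eval c ≠ 0 := by
  have hP : P ≠ 0 := by
    rintro rfl
    simp only [rootMultiplicity_zero] at hmult
    omega
  have hm := eval_iterate_derivative_rootMultiplicity_ne_zero hP c
  rw [hmult] at hm
  exact eval_iterate_derivative_succ_ne_zero (hroots.trans hdeg.symm) hm hmk.le (by omega) hck

/-- If `P` is a monic hyperbolic real polynomial of degree `n`, `2 ≤ k ≤ n - 1`,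
and `c` is a root of `P` of multiplicity `m` with `1 ≤ m < k` which is also a root
of `P^{(k)}`, then `c` is a simple root of `P^{(k)}`, i.e. `P^{(k+1)}(c) ≠ 0`. -/
theorem low_multiplicity_common_root_is_simple_root_of_derivative
    (n k m : ℕ) (hk : 2 ≤ k) (hk' : k ≤ n - 1)
    (P : Polynomial ℝ) (hmonic : P.Monic) (hdeg : P.natDegree = n)
    (hroots : P.roots.card = n) (hsplit : (P.map (RingHom.id ℝ)).Splits)
    (c : ℝ) (hmult : P.rootMultiplicity c = m) (hm1 : 1 ≤ m) (hmk : m < k)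
    (hck : (Polynomial.derivative^[k] P).eval c = 0) :
    (Polynomial.derivative^[k + 1] P).eval c ≠ 0 :=
  low_multiplicity_common_root_is_simple_root_of_derivative_general n k m hk' P hdeg hroots c hmult
    hm1 hmk hck
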